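/- In the combinatorial forcing associated to F ⊆ AR and a selective coideal H: for every A ∈ H there exists B ∈ H with B ≤ A which decides every b ∈ AR(B). -/
import Mathlib


open Set

/-- A triple `(R, ≤, r)` with a finitization quasi-order, satisfying axioms
(A.1)–(A.4) of Todorcevic's abstract Ramsey theory. -/
structure TRSpace where
  R : Type
  AR : Type
  le : R → R → Prop
  r : ℕ → R → AR
  lefin : AR → AR → Prop
  le_refl : ∀ A, le A A
  le_trans : ∀ A B C, le A B → le B C → le A C
  lefin_refl : ∀ a, lefin a a
  lefin_trans : ∀ a b c, lefin a b → lefin b c → lefin a c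
  A1 : ∀ A B, r 0 A = r 0 B
  A2 : ∀ A B, A ≠ B → ∃ n, r n A ≠ r n B
  A3 : ∀ A B n m, r n A = r m B → n = m ∧ ∀ i < n, r i A = r i B
  A4i : ∀ A B, le A B ↔ ∀ n, ∃ m, lefin (r n A) (r m B)
  A4ii : ∀ a, {b | lefin b a}.Finite

namespace TRSpace

variable {S : TRSpace}

/-- The Ellentuck-type neighborhood `[a, A]`. -/
def nbhd (S : TRSpace) (a : S.AR) (A : S.R) : Set S.R :=
  {B | (∃ n, S.r n B = a) ∧ S.le B A}

/-- `AR(A)`: approximations compatible with `A`. -/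
def ARof (S : TRSpace) (A : S.R) : Set S.AR := {a | (S.nbhd a A).Nonempty}

/-- `AR_n`: the `n`-th approximations. -/
def ARn (S : TRSpace) (n : ℕ) : Set S.AR := {a | ∃ A, S.r n A = a}

/-- The length of an approximation: the unique `n` with `a = r n A`. -/
noncomputable def len (S : TRSpace) (a : S.AR) : ℕ := sInf {n | ∃ A, S.r n A = a}

/-- `depth_A(a)`: the least `n` with `a ≤_fin r n A`. -/
noncomputable def depth (S : TRSpace) (A : S.R) (a : S.AR) : ℕ :=
  sInf {n | S.lefin a (S.r n A)}

/-- The neighborhood `[n, A] = [r_n(A), A]`. -/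
def nbhdN (S : TRSpace) (n : ℕ) (A : S.R) : Set S.R := S.nbhd (S.r n A) A

/-- Axioms (A.5) (amalgamation) and (A.6) (pigeonhole), making `S` a
topological Ramsey space (together with metric closedness, which is
implicit in the abstract formulation used here). -/
structure IsTopRamsey (S : TRSpace) : Prop where
  A5i : ∀ A, ∀ a ∈ S.ARof A, ∀ B ∈ S.nbhdN (S.depth A a) A, (S.nbhd a B).Nonempty
  A5ii : ∀ A, ∀ a ∈ S.ARof A, ∀ B ∈ S.nbhd a A,
    ∃ A' ∈ S.nbhdN (S.depth A a) A, S.nbhd a A' ⊆ S.nbhd a B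
  A6 : ∀ A, ∀ a ∈ S.ARof A, ∀ O : Set S.AR,
    ∃ B ∈ S.nbhdN (S.depth A a) A,
      (S.r (S.len a + 1) '' (S.nbhd a B) ⊆ O) ∨ (S.r (S.len a + 1) '' (S.nbhd a B) ⊆ Oᶜ)

/-- A coideal on `S`: a family upward closed under `≤` satisfying
(A.5) mod `H` and (A.6) mod `H`. -/
structure Coideal (S : TRSpace) where
  H : Set S.R
  nonempty : H.Nonempty
  up : ∀ A B, S.le A B → A ∈ H → B ∈ H
  A5i : ∀ A ∈ H, ∀ a ∈ S.ARof A, ∀ B ∈ S.nbhdN (S.depth A a) A ∩ H,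
    (S.nbhd a B ∩ H).Nonempty
  A5ii : ∀ A ∈ H, ∀ a ∈ S.ARof A, ∀ B ∈ S.nbhd a A ∩ H,
    ∃ A' ∈ S.nbhdN (S.depth A a) A ∩ H, S.nbhd a A' ⊆ S.nbhd a B
  A6 : ∀ a : S.AR, ∀ O : Set S.AR, ∀ A ∈ H, (S.nbhd a A).Nonempty →
    ∃ B ∈ S.nbhdN (S.depth A a) A ∩ H,
      (S.r (S.len a + 1) '' (S.nbhd a B) ⊆ O) ∨ (S.r (S.len a + 1) '' (S.nbhd a B) ⊆ Oᶜ)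

/-- `H` is selective: families `(A_a)_{a ∈ I}` of members of `H` below `A`
can be diagonalized inside `H`. -/
def Coideal.Selective (𝓗 : Coideal S) : Prop :=
  ∀ A ∈ 𝓗.H, ∀ (I : Set S.AR) (As : S.AR → S.R),
    (∀ a ∈ I, As a ∈ 𝓗.H ∧ S.le (As a) A ∧ (S.nbhd a (As a)).Nonempty) →
    ∃ B ∈ 𝓗.H, S.le B A ∧ ∀ a ∈ I ∩ S.ARof B, S.nbhd a B ⊆ S.nbhd a (As a)

/-- The sequence `(D_a)_{a ∈ I}` of subsets of `H` has the D–O property below `A`. -/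
def Coideal.DOProp (𝓗 : Coideal S) (A : S.R) (I : Set S.AR) (D : S.AR → Set S.R) : Prop :=
  (∀ a ∈ I, D a ⊆ 𝓗.H ∧ ∃ C ∈ D a, (S.nbhd a C).Nonempty) ∧
  (∀ a ∈ I, ∀ B ∈ S.nbhd a A ∩ 𝓗.H, ∃ C ∈ D a, S.le C B) ∧
  (∀ a ∈ I, ∀ B ∈ D a, S.le B A → ∀ C ∈ S.nbhdN (S.depth B a) B ∩ 𝓗.H, C ∈ D a)

/-- `X` is `H`-Ramsey. -/
def Coideal.HRamsey (𝓗 : Coideal S) (X : Set S.R) : Prop :=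
  ∀ (a : S.AR) (A : S.R), A ∈ 𝓗.H → (S.nbhd a A).Nonempty →
    ∃ B ∈ S.nbhd a A ∩ 𝓗.H, (S.nbhd a B).Nonempty ∧
      (S.nbhd a B ⊆ X ∨ S.nbhd a B ⊆ Xᶜ)

/-- `X` is `H`-Ramsey null. -/
def Coideal.HRamseyNull (𝓗 : Coideal S) (X : Set S.R) : Prop :=
  ∀ (a : S.AR) (A : S.R), A ∈ 𝓗.H → (S.nbhd a A).Nonempty →
    ∃ B ∈ S.nbhd a A ∩ 𝓗.H, (S.nbhd a B).Nonempty ∧ S.nbhd a B ⊆ Xᶜ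

/-- `X` is `H`-Baire. -/
def Coideal.HBaire (𝓗 : Coideal S) (X : Set S.R) : Prop :=
  ∀ (a : S.AR) (A : S.R), A ∈ 𝓗.H → (S.nbhd a A).Nonempty →
    ∃ (b : S.AR) (B : S.R), B ∈ 𝓗.H ∧ (S.nbhd b B).Nonempty ∧
      S.nbhd b B ⊆ S.nbhd a A ∧ (S.nbhd b B ⊆ X ∨ S.nbhd b B ⊆ Xᶜ)

end TRSpace

namespace TRSpace
variable {S : TRSpace}

/-- `A` accepts `a` (w.r.t. the family `F` and the coideal `𝓗`). -/
def Coideal.Accepts (𝓗 : Coideal S) (F : Set S.AR) (A : S.R) (a : S.AR) : Prop :=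
  S.nbhd a A = ∅ ∨ ∀ B ∈ S.nbhd a A ∩ 𝓗.H, ∃ n, S.r n B ∈ F

/-- `A` rejects `a`. -/
def Coideal.Rejects (𝓗 : Coideal S) (F : Set S.AR) (A : S.R) (a : S.AR) : Prop :=
  (S.nbhd a A).Nonempty ∧ ∀ B ∈ S.nbhdN (S.depth A a) A ∩ 𝓗.H, ¬ 𝓗.Accepts F B a

/-- `A` decides `a`. -/
def Coideal.Decides (𝓗 : Coideal S) (F : Set S.AR) (A : S.R) (a : S.AR) : Prop :=
  𝓗.Accepts F A a ∨ 𝓗.Rejects F A a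

end TRSpace


namespace TRSpace

lemma nbhd_mono' {S : TRSpace} {a : S.AR} {B C : S.R} (h : S.le C B) :
    S.nbhd a C ⊆ S.nbhd a B := fun _ hD => ⟨hD.1, S.le_trans _ _ _ hD.2 h⟩

lemma Coideal.accepts_of_subset' {S : TRSpace} (𝓗 : Coideal S) {F : Set S.AR}
    {a : S.AR} {C E : S.R} (h : 𝓗.Accepts F C a) (hs : S.nbhd a E ⊆ S.nbhd a C) :
    𝓗.Accepts F E a := by
  rcases h with h | h
  · left; exact Set.eq_empty_of_subset_empty (h ▸ hs)
  · right; exact fun B hB => h B ⟨hs hB.1, hB.2⟩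

end TRSpace

open TRSpace in
/-- for a selective coideal, below every `A ∈ H` there is a
`B ∈ H` deciding every `b ∈ AR(B)`. -/
theorem exists_deciding_all (S : TRSpace) (hS : S.IsTopRamsey)
    (𝓗 : Coideal S) (hsel : 𝓗.Selective)
    (F : Set S.AR) (A : S.R) (hA : A ∈ 𝓗.H) :
    ∃ B ∈ 𝓗.H, S.le B A ∧ ∀ b ∈ S.ARof B, 𝓗.Decides F B b := by
  classical
  have key : ∀ a ∈ S.ARof A, ∃ C, C ∈ 𝓗.H ∧ S.le C A ∧ (S.nbhd a C).Nonempty ∧ 𝓗.Decides F C a := by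
    intro a ha
    by_cases hr : 𝓗.Rejects F A a
    · exact ⟨A, hA, S.le_refl A, ha, Or.inr hr⟩
    · have hex : ∃ C ∈ S.nbhdN (S.depth A a) A ∩ 𝓗.H, 𝓗.Accepts F C a := by
        by_contra hc
        push_neg at hc
        exact hr ⟨ha, fun B hB => hc B hB⟩
      obtain ⟨C, hC, hacc⟩ := hex
      have hCne : (S.nbhd a C).Nonempty :=
        ((𝓗.A5i A hA a ha C hC).mono Set.inter_subset_left)
      exact ⟨C, hC.2, hC.1.2, hCne, Or.inl hacc⟩
  have : Nonempty S.R := ⟨A⟩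
  choose! As hAs using key
  obtain ⟨B, hBH, hBA, hdiag⟩ := hsel A hA (S.ARof A) As
    (fun a ha => ⟨(hAs a ha).1, (hAs a ha).2.1, (hAs a ha).2.2.1⟩)
  refine ⟨B, hBH, hBA, ?_⟩
  intro b hb
  have hbA : b ∈ S.ARof A := by
    obtain ⟨C, hC⟩ := hb
    exact ⟨C, hC.1, S.le_trans _ _ _ hC.2 hBA⟩
  have hsub : S.nbhd b B ⊆ S.nbhd b (As b) := hdiag b ⟨hbA, hb⟩
  rcases (hAs b hbA).2.2.2 with hacc | hrej
  · exact Or.inl (𝓗.accepts_of_subset' hacc hsub)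
  · refine Or.inr ⟨hb, ?_⟩
    intro C hC haccC
    obtain ⟨D, hDmem, hDH⟩ := 𝓗.A5i B hBH b hb C hC
    have hDacc : 𝓗.Accepts F D b := 𝓗.accepts_of_subset' haccC (nbhd_mono' hDmem.2)
    have hDB : D ∈ S.nbhd b B := ⟨hDmem.1, S.le_trans _ _ _ hDmem.2 hC.1.2⟩
    have hDAsb : D ∈ S.nbhd b (As b) := hsub hDB
    have hAsbH : As b ∈ 𝓗.H := (hAs b hbA).1
    have hbAsb : b ∈ S.ARof (As b) := ⟨D, hDAsb⟩
    obtain ⟨E, hE, hEsub⟩ := 𝓗.A5ii (As b) hAsbH b hbAsb D ⟨hDAsb, hDH⟩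
    exact hrej.2 E hE (𝓗.accepts_of_subset' hDacc hEsub)
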